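/- arXiv:1504.02414 — 8 statements merged into one kernel-verified Lean document; each statement's English description precedes it below -/
import Mathlib

section
/- Let G be a nontrivial connected simple graph that contains bridges. If b is the maximum number of bridges incident with a single vertex of G, then pc(G) ≥ b. -/
open SimpleGraph

/-- An edge-coloring `c` with `k` colors is a proper-path coloring of `G` if every pair of
distinct vertices is joined by a path on which no two consecutive edges share a color. -/
def IsProperPathColoring {V : Type*} (G : SimpleGraph V) {k : ℕ}
    (c : Sym2 V → Fin k) : Prop :=
  ∀ u v : V, u ≠ v → ∃ p : G.Walk u v, p.IsPath ∧ (p.edges.map c).Chain' (· ≠ ·)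

/-- The proper connection number of `G`: the least number of colors in a
proper-path coloring of `G`. -/
noncomputable def pc {V : Type*} (G : SimpleGraph V) : ℕ :=
  sInf {k : ℕ | ∃ c : Sym2 V → Fin k, IsProperPathColoring G c}

/-! If `vx` and `vy` are bridges at `v`, every `x`–`y` walk crosses both of them, so the only
`x`–`y` path is `x v y`. In a proper-path coloring the two bridges must therefore get different
colors, and the bridges at any vertex need at least as many colors as there are of them. -/

namespace SimpleGraph

variable {V : Type*} {G : SimpleGraph V}

theorem IsBridge.mem_edges_of_adj {v x y : V} (hb : G.IsBridge s(v, x)) (hvy : G.Adj v y)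
    (hne : s(v, y) ≠ s(v, x)) (p : G.Walk x y) : s(v, x) ∈ p.edges := by
  by_contra hp
  have hxy : (G.deleteEdges {s(v, x)}).Reachable x y :=
    reachable_deleteEdges_iff_exists_walk.mpr ⟨p, hp⟩
  have hvy' : (G.deleteEdges {s(v, x)}).Adj v y := by
    simp only [deleteEdges_adj, Set.mem_singleton_iff]
    exact ⟨hvy, hne⟩
  exact isBridge_iff.mp hb (hvy'.reachable.trans hxy.symm)

theorem Walk.IsPath.edges_eq_pair {x y v : V} {p : G.Walk x y} (hp : p.IsPath)
    (hxv : s(x, v) ∈ p.edges) (hvy : s(v, y) ∈ p.edges) : p.edges = [s(x, v), s(v, y)] := by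
  cases p with
  | nil => simp at hxv
  | @cons _ w _ hxw q =>
    obtain rfl : v = w := by simpa using hp.eq_snd_of_mem_edges hxv
    rw [Walk.cons_isPath_iff] at hp
    have hxy : x ≠ y := fun h => hp.2 (h ▸ q.end_mem_support)
    have hvy' : s(v, y) ∈ q.edges :=
      (List.mem_cons.mp hvy).resolve_left fun h => by have := Sym2.eq_iff.mp h; grind
    cases q with
    | nil => simp at hvy'
    | @cons _ w _ hvw r =>
      obtain rfl : y = w := by simpa using hp.1.eq_snd_of_mem_edges hvy'
      obtain rfl := (Walk.isPath_iff_nil.mp (Walk.cons_isPath_iff _ _ |>.mp hp.1).1).eq_nil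
      rfl

end SimpleGraph

section ProperPathColoring

variable {V : Type*} {G : SimpleGraph V} {k : ℕ} {c : Sym2 V → Fin k}

theorem IsProperPathColoring.preconnected (hc : IsProperPathColoring G c) : G.Preconnected :=
  fun u v => (eq_or_ne u v).elim (· ▸ .refl u) fun huv => (hc u v huv).elim fun p _ => p.reachable

theorem SimpleGraph.Preconnected.isProperPathColoring_of_injective (hG : G.Preconnected)
    (hinj : Function.Injective c) : IsProperPathColoring G c := by
  classical
  intro u v _
  let p := (hG u v).some.toPath
  exact ⟨p, p.2, (p.2.edges_nodup.map hinj).isChain⟩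

theorem SimpleGraph.Preconnected.exists_isProperPathColoring [Finite V] (hG : G.Preconnected) :
    ∃ k, ∃ c : Sym2 V → Fin k, IsProperPathColoring G c :=
  have e := Finite.equivFin (Sym2 V)
  ⟨_, e, hG.isProperPathColoring_of_injective e.injective⟩

theorem IsProperPathColoring.injOn_bridges (hc : IsProperPathColoring G c) (v : V) :
    Set.InjOn c {e | G.IsBridge e ∧ v ∈ e} := by
  rintro e₁ ⟨hb₁, hv₁⟩ e₂ ⟨hb₂, hv₂⟩ hce
  by_contra hne
  obtain ⟨x, rfl⟩ := Sym2.mem_iff_exists.mp hv₁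
  obtain ⟨y, rfl⟩ := Sym2.mem_iff_exists.mp hv₂
  have hvx : G.Adj v x := hb₁.reachable_iff_adj.mp (hc.preconnected v x)
  have hvy : G.Adj v y := hb₂.reachable_iff_adj.mp (hc.preconnected v y)
  have hxy : x ≠ y := by rintro rfl; exact hne rfl
  obtain ⟨p, hp, hchain⟩ := hc x y hxy
  have hxv : s(x, v) ∈ p.edges := Sym2.eq_swap ▸ hb₁.mem_edges_of_adj hvy (Ne.symm hne) p
  have hvy' : s(v, y) ∈ p.edges := by
    simpa using hb₂.mem_edges_of_adj hvx hne p.reverse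
  rw [hp.edges_eq_pair hxv hvy'] at hchain
  exact List.isChain_pair.mp hchain (Sym2.eq_swap ▸ hce)

theorem IsProperPathColoring.ncard_bridges_le (hc : IsProperPathColoring G c) (v : V) :
    {e | G.IsBridge e ∧ v ∈ e}.ncard ≤ k := calc
  {e | G.IsBridge e ∧ v ∈ e}.ncard = (c '' {e | G.IsBridge e ∧ v ∈ e}).ncard :=
    (hc.injOn_bridges v).ncard_image.symm
  _ ≤ (Set.univ : Set (Fin k)).ncard := Set.ncard_le_ncard (Set.subset_univ _)
  _ = k := by simp

end ProperPathColoring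

theorem pc_ge_max_bridges_general {V : Type*} [Fintype V]
    (G : SimpleGraph V) (hG : G.Connected) (b : ℕ)
    (hb : ∃ v : V, {e : Sym2 V | G.IsBridge e ∧ v ∈ e}.ncard = b) :
    b ≤ pc G := by
  obtain ⟨v, rfl⟩ := hb
  exact le_csInf hG.preconnected.exists_isProperPathColoring fun k ⟨c, hc⟩ =>
    hc.ncard_bridges_le v

/-- If `G` is a nontrivial connected graph containing bridges and `b` is the maximum number
of bridges incident with a single vertex of `G`, then `pc G ≥ b`. -/
theorem pc_ge_max_bridges {V : Type*} [Fintype V] [Nontrivial V]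
    (G : SimpleGraph V) (hG : G.Connected) (hbr : ∃ e : Sym2 V, G.IsBridge e) (b : ℕ)
    (hb : ∃ v : V, {e : Sym2 V | G.IsBridge e ∧ v ∈ e}.ncard = b)
    (hmax : ∀ v : V, {e : Sym2 V | G.IsBridge e ∧ v ∈ e}.ncard ≤ b) :
    b ≤ pc G :=
  pc_ge_max_bridges_general G hG b hb
end

section
/- If T is a nontrivial tree (a connected acyclic graph with at least two vertices), then pc(T) = Δ(T), the maximum degree of T. -/
open SimpleGraph

/-!
In a tree the only path between two neighbours `v`, `w` of a vertex `u` is `v u w`, so a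
proper-path coloring gives distinct colors to the edges at `u`; hence `pc T ≥ Δ(T)`.
Conversely, in a proper edge coloring every path is properly colored, and a tree has a proper
edge coloring with `Δ(T)` colors: label the neighbours of each `u` injectively by elements
`ι u v` of an abelian group of order `Δ(T)` and color the edge `uv` by `φ u + ι u v`, where the
potential `φ`, obtained by summing `ι a b - ι b a` along the paths from a root, makes this
symmetric in `u` and `v`.
-/

namespace SimpleGraph

variable {V α : Type*} {G : SimpleGraph V}

def IsProperEdgeColoring (G : SimpleGraph V) (c : Sym2 V → α) : Prop :=
  ∀ ⦃u v w : V⦄, G.Adj u v → G.Adj u w → v ≠ w → c s(u, v) ≠ c s(u, w)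

namespace IsProperEdgeColoring

variable {c : Sym2 V → α}

theorem degree_le_card [Fintype α] (hc : G.IsProperEdgeColoring c) (u : V)
    [Fintype (G.neighborSet u)] : G.degree u ≤ Fintype.card α := by
  rw [← card_neighborSet_eq_degree]
  exact Fintype.card_le_of_injective (fun v : G.neighborSet u ↦ c s(u, v))
    fun v w hvw ↦ Subtype.ext <| by_contra fun hne ↦ hc v.2 w.2 hne hvw

theorem isChain_ne_of_isPath (hc : G.IsProperEdgeColoring c) :
    ∀ {u v : V} (p : G.Walk u v), p.IsPath → (p.edges.map c).IsChain (· ≠ ·)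
  | _, _, .nil, _ => List.isChain_nil
  | _, _, .cons _ .nil, _ => List.isChain_singleton _
  | _, _, .cons h (.cons h' p), hp => by
    rw [Walk.cons_isPath_iff] at hp
    have htail := isChain_ne_of_isPath hc _ hp.1
    simp only [Walk.edges_cons, List.map_cons, List.isChain_cons_cons] at htail ⊢
    refine ⟨?_, htail⟩
    rw [Sym2.eq_swap]
    exact hc h.symm h' fun e ↦ hp.2 (by simp [e])

theorem isProperPathColoring {k : ℕ} {c : Sym2 V → Fin k} (hc : G.IsProperEdgeColoring c)
    (hconn : G.Preconnected) : IsProperPathColoring G c := fun u v _ ↦ by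
  classical
  obtain ⟨p⟩ := hconn u v
  exact ⟨p.bypass, p.bypass_isPath, hc.isChain_ne_of_isPath _ p.bypass_isPath⟩

end IsProperEdgeColoring

theorem _root_.IsProperPathColoring.isProperEdgeColoring {k : ℕ} {c : Sym2 V → Fin k}
    (hc : IsProperPathColoring G c) (hG : G.IsAcyclic) : G.IsProperEdgeColoring c := by
  intro u v w hv hw hvw
  have hvuw : (Walk.cons hv.symm (Walk.cons hw Walk.nil)).IsPath := by
    simp [Walk.cons_isPath_iff, hv.ne.symm, hw.ne, hvw]
  obtain ⟨p, hp, hchain⟩ := hc v w hvw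
  obtain rfl : p = _ :=
    congrArg Subtype.val ((hG.subsingleton_path v w).elim ⟨p, hp⟩ ⟨_, hvuw⟩)
  simp only [Walk.edges_cons, Walk.edges_nil, List.map_cons, List.map_nil] at hchain
  rw [Sym2.eq_swap]
  exact List.isChain_pair.1 hchain

theorem _root_.pc_le {k : ℕ} {c : Sym2 V → Fin k} (hc : IsProperPathColoring G c) : pc G ≤ k :=
  Nat.sInf_le ⟨c, hc⟩

theorem IsAcyclic.maxDegree_le_pc [Fintype V] [DecidableRel G.Adj] (hG : G.IsAcyclic)
    {k : ℕ} {c : Sym2 V → Fin k} (hc : IsProperPathColoring G c) : G.maxDegree ≤ pc G := by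
  refine le_csInf ⟨k, c, hc⟩ fun k ⟨c, hc⟩ ↦ ?_
  simpa using G.maxDegree_le_of_forall_degree_le _
    fun u ↦ (hc.isProperEdgeColoring hG).degree_le_card u

theorem IsAcyclic.exists_potential {A : Type*} [AddCommGroup A] (hG : G.IsAcyclic)
    (hconn : G.Preconnected) (f : V → V → A) :
    ∃ φ : V → A, ∀ ⦃u v⦄, G.Adj u v → φ u + f u v = φ v + f v u := by
  classical
  cases isEmpty_or_nonempty V with
  | inl _ => exact ⟨isEmptyElim, fun u ↦ isEmptyElim u⟩
  | inr _ =>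
  let r := Classical.arbitrary V
  let ω (d : G.Dart) : A := f d.fst d.snd - f d.snd d.fst
  let φ (v : V) : A := ((hconn r v).some.bypass.darts.map ω).sum
  have hφ {v : V} (p : G.Walk r v) (hp : p.IsPath) : (p.darts.map ω).sum = φ v := by
    obtain rfl : p = _ := congrArg Subtype.val
      ((hG.subsingleton_path r v).elim ⟨p, hp⟩ ⟨_, (hconn r v).some.bypass_isPath⟩)
    rfl
  refine ⟨φ, fun u v h ↦ ?_⟩
  obtain ⟨p, hp⟩ : ∃ p : G.Walk r u, p.IsPath := ⟨_, (hconn r u).some.bypass_isPath⟩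
  by_cases hv : v ∈ p.support
  · -- the path to `u` passes through its neighbour `v`, so it ends with the edge `vu`
    have hdrop : p.dropUntil v hv = .cons h.symm .nil := congrArg Subtype.val
      ((hG.subsingleton_path v u).elim ⟨_, hp.dropUntil hv⟩ ⟨_, by simp [h.ne.symm]⟩)
    have hsplit := congrArg (fun q ↦ (q.darts.map ω).sum) (p.take_spec hv)
    simp only [Walk.darts_append, List.map_append, List.sum_append, hdrop, Walk.darts_cons,
      Walk.darts_nil, List.map_cons, List.map_nil, List.sum_cons, List.sum_nil,
      hφ _ (hp.takeUntil hv)] at hsplit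
    rw [← hφ p hp, ← hsplit]
    simp only [ω]
    abel
  · rw [← hφ p hp, ← hφ _ (hp.concat hv h)]
    simp only [Walk.darts_concat, List.concat_eq_append, List.map_append, List.sum_append,
      List.map_cons, List.map_nil, List.sum_cons, List.sum_nil, ω]
    abel

theorem IsAcyclic.exists_isProperEdgeColoring {A : Type*} [AddCommGroup A] [Fintype A]
    [G.LocallyFinite] (hG : G.IsAcyclic) (hconn : G.Preconnected)
    (hdeg : ∀ v, G.degree v ≤ Fintype.card A) :
    ∃ c : Sym2 V → A, G.IsProperEdgeColoring c := by
  have (u : V) : ∃ ι : V → A, Set.InjOn ι (G.neighborSet u) := by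
    obtain ⟨e⟩ := Function.Embedding.nonempty_of_card_le
      ((card_neighborSet_eq_degree G u).trans_le (hdeg u))
    exact Set.exists_injOn_iff_injective.2 ⟨e, e.injective⟩
  choose ι hι using this
  obtain ⟨φ, hφ⟩ := hG.exists_potential hconn ι
  classical
  refine ⟨Sym2.lift ⟨fun u v ↦ if G.Adj u v then φ u + ι u v else 0, fun u v ↦ ?_⟩, ?_⟩
  · by_cases h : G.Adj u v
    · simp [h, h.symm, hφ h]
    · have h' : ¬G.Adj v u := fun h' ↦ h h'.symm
      simp [h, h']
  · intro u v w hv hw hvw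
    simp only [Sym2.lift_mk, if_pos hv, if_pos hw, ne_eq, add_right_inj]
    exact fun h ↦ hvw (hι u hv hw h)

end SimpleGraph

/-- If `T` is a nontrivial tree, then `pc T = Δ(T)`. -/
theorem pc_tree_eq_maxDegree {V : Type*} [Fintype V] [Nontrivial V]
    (T : SimpleGraph V) [DecidableRel T.Adj] (hconn : T.Connected) (hac : T.IsAcyclic) :
    pc T = T.maxDegree := by
  have : NeZero T.maxDegree := ⟨(hconn.preconnected.minDegree_pos_of_nontrivial.trans_le
    T.minDegree_le_maxDegree).ne'⟩
  obtain ⟨c, hc⟩ := hac.exists_isProperEdgeColoring (A := Fin T.maxDegree) hconn.preconnected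
    (by simpa using T.degree_le_maxDegree)
  have hpc := hc.isProperPathColoring hconn.preconnected
  exact (pc_le hpc).antisymm (hac.maxDegree_le_pc hpc)
end

section
/- Every complete k-partite graph K_{n_1,n_2,…,n_k} with k ≥ 3 parts that is not a complete graph (i.e., some part has at least two vertices) has proper connection number 2, and there exists a proper-path 2-coloring of it having the strong property. -/
open SimpleGraph

/-- The strong property: any two distinct vertices are joined by two proper paths whose
first edge colors differ and whose last edge colors differ. -/
def HasStrongProperty {V : Type*} (G : SimpleGraph V) {k : ℕ}
    (c : Sym2 V → Fin k) : Prop :=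
  ∀ u v : V, u ≠ v → ∃ p q : G.Walk u v,
    p.IsPath ∧ (p.edges.map c).Chain' (· ≠ ·) ∧
    q.IsPath ∧ (q.edges.map c).Chain' (· ≠ ·) ∧
    (p.edges.map c).head? ≠ (q.edges.map c).head? ∧
    (p.edges.map c).getLast? ≠ (q.edges.map c).getLast?

/-! The part with two vertices, against the union of the other parts (which meets two distinct
parts), spans a complete bipartite subgraph. Label the vertices by bits so that each side carries
both bits, and color an edge by the sum of the bits of its ends: a walk is then proper iff any two
vertices at distance two along it carry different bits. Each pair of vertices is joined by two
paths of length 2 through common neighbours with different bits, by two paths of length 4, or by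
an edge and a path of length 3, and in each case the first and the last colors differ. With a
single color a proper path has length at most 1, so two nonadjacent vertices force `pc G ≥ 2`. -/

theorem add_eq_add_comm_iff {M : Type*} [AddCommMagma M] [IsRightCancelAdd M] (x y z : M) :
    x + y = y + z ↔ x = z := by
  rw [add_comm y, add_left_inj]

namespace SimpleGraph

variable {V : Type*} {G : SimpleGraph V}

def StronglyJoined (G : SimpleGraph V) {k : ℕ} (c : Sym2 V → Fin k) (u v : V) : Prop :=
  ∃ p q : G.Walk u v,
    p.IsPath ∧ (p.edges.map c).IsChain (· ≠ ·) ∧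
    q.IsPath ∧ (q.edges.map c).IsChain (· ≠ ·) ∧
    (p.edges.map c).head? ≠ (q.edges.map c).head? ∧
    (p.edges.map c).getLast? ≠ (q.edges.map c).getLast?

section VertexSum

variable {n : ℕ} (b : V → Fin n)

def vertexSumColoring : Sym2 V → Fin n :=
  Sym2.lift ⟨fun x y => b x + b y, fun _ _ => add_comm _ _⟩

@[simp]
theorem vertexSumColoring_mk (x y : V) : vertexSumColoring b s(x, y) = b x + b y :=
  rfl

variable {b} {u v w w₀ w₁ x : V}

theorem stronglyJoined_of_length_two_paths (hu₀ : G.Adj u w₀) (hv₀ : G.Adj w₀ v)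
    (hu₁ : G.Adj u w₁) (hv₁ : G.Adj w₁ v) (hw : b w₀ ≠ b w₁) (huv : b u ≠ b v) :
    G.StronglyJoined (vertexSumColoring b) u v := by
  refine ⟨.cons hu₀ (.cons hv₀ .nil), .cons hu₁ (.cons hv₁ .nil), ?_⟩
  simp [Walk.cons_isPath_iff, hu₀.ne, hv₀.ne, hu₁.ne, hv₁.ne, ne_of_apply_ne b huv, hw, huv,
    add_eq_add_comm_iff, List.isChain_cons_cons]

theorem stronglyJoined_of_adj_of_length_three_path (huv : G.Adj u v) (huw : G.Adj u w) (hwx : G.Adj w x)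
    (hxv : G.Adj x v) (hux : b u ≠ b x) (hwv : b w ≠ b v) :
    G.StronglyJoined (vertexSumColoring b) u v := by
  refine ⟨.cons huv .nil, .cons huw (.cons hwx (.cons hxv .nil)), ?_⟩
  simp [Walk.cons_isPath_iff, huv.ne, huw.ne, hwx.ne, hxv.ne, ne_of_apply_ne b hux,
    ne_of_apply_ne b hwv, hux, hwv, hwv.symm, add_eq_add_comm_iff, List.isChain_cons_cons]

theorem stronglyJoined_of_length_four_paths (huv : u ≠ v)
    (hu₀ : G.Adj u w₀) (hx₀ : G.Adj w₀ x) (hv₀ : G.Adj w₀ v)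
    (hu₁ : G.Adj u w₁) (hx₁ : G.Adj w₁ x) (hv₁ : G.Adj w₁ v)
    (hux : b u ≠ b x) (hw : b w₀ ≠ b w₁) (hxv : b x ≠ b v) :
    G.StronglyJoined (vertexSumColoring b) u v := by
  refine ⟨.cons hu₀ (.cons hx₀ (.cons hx₁.symm (.cons hv₁ .nil))),
    .cons hu₁ (.cons hx₁ (.cons hx₀.symm (.cons hv₀ .nil))), ?_⟩
  simp [Walk.cons_isPath_iff, huv, hu₀.ne, hu₁.ne, hv₀.ne, hv₁.ne, hx₀.ne, hx₁.ne,
    hx₀.ne.symm, hx₁.ne.symm, ne_of_apply_ne b hux, ne_of_apply_ne b hxv, ne_of_apply_ne b hw,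
    (ne_of_apply_ne b hw).symm, hw, hw.symm, hux, hxv, add_eq_add_comm_iff, List.isChain_cons_cons]

variable (b) in
theorem hasStrongProperty_vertexSumColoring (s : V → Bool) (hG : ∀ u v, s u ≠ s v → G.Adj u v)
    (hb : ∀ σ β, ∃ x, s x = σ ∧ b x ≠ β) : HasStrongProperty G (vertexSumColoring b) := by
  intro u v huv
  by_cases hs : s u = s v
  · obtain ⟨w₀, hw₀, -⟩ := hb (!s u) (b u)
    obtain ⟨w₁, hw₁, hw⟩ := hb (!s u) (b w₀)
    have hu₀ : G.Adj u w₀ := hG _ _ (by simp [hw₀])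
    have hv₀ : G.Adj w₀ v := hG _ _ (by simp [hw₀, hs])
    have hu₁ : G.Adj u w₁ := hG _ _ (by simp [hw₁])
    have hv₁ : G.Adj w₁ v := hG _ _ (by simp [hw₁, hs])
    by_cases hbuv : b u = b v
    · obtain ⟨x, hx, hbx⟩ := hb (s u) (b u)
      have hx₀ : G.Adj w₀ x := hG _ _ (by simp [hw₀, hx])
      have hx₁ : G.Adj w₁ x := hG _ _ (by simp [hw₁, hx])
      exact stronglyJoined_of_length_four_paths huv hu₀ hx₀ hv₀ hu₁ hx₁ hv₁ hbx.symm
        (Ne.symm hw) (hbuv ▸ hbx)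
    · exact stronglyJoined_of_length_two_paths hu₀ hv₀ hu₁ hv₁ (Ne.symm hw) hbuv
  · obtain ⟨w, hw, hbw⟩ := hb (s v) (b v)
    obtain ⟨x, hx, hbx⟩ := hb (s u) (b u)
    exact stronglyJoined_of_adj_of_length_three_path (hG _ _ hs) (hG _ _ (hw ▸ hs)) (hG _ _ (hw ▸ hx ▸ Ne.symm hs))
      (hG _ _ (hx ▸ hs)) hbx.symm hbw

end VertexSum

theorem exists_hasStrongProperty_of_bipartition (s : V → Bool)
    (hG : ∀ u v, s u ≠ s v → G.Adj u v) (hs : ∀ σ, ∃ x y, x ≠ y ∧ s x = σ ∧ s y = σ) :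
    ∃ c : Sym2 V → Fin 2, HasStrongProperty G c := by
  classical
  choose x y hxy hx hy using hs
  let b : V → Fin 2 := fun z => if z = x (s z) then 1 else 0
  have hbx (σ : Bool) : b (x σ) = 1 := by simp [b, hx]
  have hby (σ : Bool) : b (y σ) = 0 := by simp [b, hy, (hxy σ).symm]
  refine ⟨vertexSumColoring b, hasStrongProperty_vertexSumColoring b s hG fun σ β => ?_⟩
  by_cases hβ : β = 1
  · exact ⟨y σ, hy σ, by simp [hby, hβ]⟩
  · exact ⟨x σ, hx σ, by rwa [hbx, ne_comm]⟩

theorem HasStrongProperty.isProperPathColoring {k : ℕ} {c : Sym2 V → Fin k}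
    (hc : HasStrongProperty G c) : IsProperPathColoring G c := fun u v huv =>
  have ⟨p, _, hp, hpc, _⟩ := hc u v huv
  ⟨p, hp, hpc⟩

theorem IsProperPathColoring.adj_of_fin_one {c : Sym2 V → Fin 1}
    (hc : IsProperPathColoring G c) {u v : V} (huv : u ≠ v) : G.Adj u v := by
  obtain ⟨p, -, hp⟩ := hc u v huv
  cases p with
  | nil => exact absurd rfl huv
  | cons h p =>
    cases p with
    | nil => exact h
    | cons _ _ =>
      simp only [Walk.edges_cons, List.map_cons, List.Chain', List.isChain_cons_cons] at hp
      exact (hp.1 (Subsingleton.elim _ _)).elim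

theorem pc_eq_two_of_not_adj {c : Sym2 V → Fin 2} (hc : IsProperPathColoring G c) {u v : V}
    (huv : u ≠ v) (hnadj : ¬G.Adj u v) : pc G = 2 := by
  refine le_antisymm (Nat.sInf_le ⟨c, hc⟩) (le_csInf ⟨2, c, hc⟩ ?_)
  rintro m ⟨c', hc'⟩
  by_contra! hm
  interval_cases m
  · exact (c' s(u, v)).elim0
  · exact hnadj (hc'.adj_of_fin_one huv)

end SimpleGraph

theorem pc_complete_multipartite_general {V : Type*} (G : SimpleGraph V) (k : ℕ)
    (hk : 3 ≤ k) (f : V → Fin k) (hsurj : Function.Surjective f)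
    (hadj : ∀ u v : V, G.Adj u v ↔ f u ≠ f v)
    (hbig : ∃ i : Fin k, 2 ≤ Nat.card {v : V // f v = i}) :
    pc G = 2 ∧ ∃ c : Sym2 V → Fin 2, IsProperPathColoring G c ∧ HasStrongProperty G c := by
  obtain ⟨i₀, hi₀⟩ := hbig
  have : Finite {v // f v = i₀} := Nat.finite_of_card_ne_zero (by omega)
  obtain ⟨⟨a, ha⟩, ⟨a', ha'⟩, haa'⟩ := (Finite.one_lt_card_iff_nontrivial.mp hi₀).exists_pair_ne
  replace haa' : a ≠ a' := fun h => haa' (Subtype.ext h)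
  obtain ⟨j₁, hj₁, j₂, hj₂, hj⟩ : ∃ j₁ ∈ ({i₀}ᶜ : Finset (Fin k)), ∃ j₂ ∈ ({i₀}ᶜ : Finset (Fin k)),
      j₁ ≠ j₂ :=
    Finset.one_lt_card.mp <| by
      rw [Finset.card_compl, Fintype.card_fin, Finset.card_singleton]; omega
  obtain ⟨p, rfl⟩ := hsurj j₁
  obtain ⟨q, rfl⟩ := hsurj j₂
  obtain ⟨c, hc⟩ := exists_hasStrongProperty_of_bipartition (G := G) (fun v => decide (f v = i₀))
    (fun u v h => (hadj u v).mpr fun h' => h (by rw [h'])) fun σ => by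
      cases σ
      · exact ⟨p, q, ne_of_apply_ne f hj, by simpa using hj₁, by simpa using hj₂⟩
      · exact ⟨a, a', haa', by simpa using ha, by simpa using ha'⟩
  have hnadj : ¬G.Adj a a' := by simp [hadj, ha, ha']
  exact ⟨pc_eq_two_of_not_adj hc.isProperPathColoring haa' hnadj, c,
    hc.isProperPathColoring, hc⟩

/-- Every complete `k`-partite graph with `k ≥ 3` parts (all nonempty) which is not
complete (some part has at least two vertices) has proper connection number 2, and admits
a proper-path 2-coloring with the strong property. -/
theorem pc_complete_multipartite {V : Type*} [Fintype V] (G : SimpleGraph V) (k : ℕ)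
    (hk : 3 ≤ k) (f : V → Fin k) (hsurj : Function.Surjective f)
    (hadj : ∀ u v : V, G.Adj u v ↔ f u ≠ f v)
    (hbig : ∃ i : Fin k, 2 ≤ Nat.card {v : V // f v = i}) :
    pc G = 2 ∧ ∃ c : Sym2 V → Fin 2, IsProperPathColoring G c ∧ HasStrongProperty G c :=
  pc_complete_multipartite_general G k hk f hsurj hadj hbig
end

section
/- If G is a connected simple graph with diameter diam(G) ≥ 4, then its complement Ḡ is connected and pc(Ḡ) = 2. -/
open SimpleGraph

/-!
Take `u`, `v` with `dist u v = diam G ≥ 4`. No walk of length at most 3 joins them, so the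
closed neighbourhoods `N[u]` and `N[v]` are disjoint and every vertex of `N[u]` is adjacent in
`Gᶜ` to every vertex of `N[v]`; in particular `uv` is an edge of `Gᶜ`. Colour `uv` with 0, the
other edges at `u` or `v` with 1, and all remaining edges with 0. Two vertices that are not
adjacent in `Gᶜ` are then joined by `x u v y` or `x v u y` (colours 1 0 1), unless both lie in
the same closed neighbourhood, say `N[u]`, where `x v u b y` with `b` a `G`-neighbour of `v`
works (colours 1 0 1 0). One colour never suffices because `Gᶜ` is not complete.
-/

section ProperPath

variable {V : Type*} {H : SimpleGraph V} {k : ℕ} {c : Sym2 V → Fin k} {x y : V}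

def HasProperPath (H : SimpleGraph V) (c : Sym2 V → Fin k) (x y : V) : Prop :=
  ∃ p : H.Walk x y, p.IsPath ∧ (p.edges.map c).IsChain (· ≠ ·)

lemma HasProperPath.of_adj (c : Sym2 V → Fin k) (h : H.Adj x y) : HasProperPath H c x y :=
  ⟨h.toWalk, by simp [h.ne], by simp⟩

lemma HasProperPath.symm (h : HasProperPath H c x y) : HasProperPath H c y x := by
  obtain ⟨p, hp, hc⟩ := h
  refine ⟨p.reverse, hp.reverse, ?_⟩
  rw [Walk.edges_reverse, List.map_reverse, List.isChain_reverse]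
  exact hc.imp fun _ _ => Ne.symm

lemma IsProperPathColoring.connected [Nonempty V] (hc : IsProperPathColoring H c) :
    H.Connected := by
  refine (connected_iff H).2 ⟨fun x y => ?_, ‹_›⟩
  obtain rfl | hxy := eq_or_ne x y
  · rfl
  · obtain ⟨p, -⟩ := hc x y hxy
    exact p.reachable

lemma IsProperPathColoring.two_le (hc : IsProperPathColoring H c) (hxy : x ≠ y)
    (hn : ¬H.Adj x y) : 2 ≤ k := by
  obtain ⟨p, -, hchain⟩ := hc x y hxy
  match p, hchain with
  | .nil, _ => exact absurd rfl hxy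
  | .cons h .nil, _ => exact absurd h hn
  | .cons _ (.cons _ _), hchain =>
    have hne := (List.isChain_cons_cons.1 hchain).1
    have := Fin.val_ne_of_ne hne
    omega

lemma pc_eq_two {c : Sym2 V → Fin 2} (hc : IsProperPathColoring H c) (hxy : x ≠ y)
    (hn : ¬H.Adj x y) : pc H = 2 :=
  le_antisymm (Nat.sInf_le ⟨c, hc⟩)
    (le_csInf ⟨2, c, hc⟩ fun _ ⟨_, hc'⟩ => hc'.two_le hxy hn)

end ProperPath

section DoubleStar

variable {V : Type*} {H : SimpleGraph V} {u v x y b : V}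

open Classical in
noncomputable def doubleStarColoring (u v : V) (e : Sym2 V) : Fin 2 :=
  if e ≠ s(u, v) ∧ (u ∈ e ∨ v ∈ e) then 1 else 0

lemma doubleStarColoring_comm (u v : V) : doubleStarColoring u v = doubleStarColoring v u := by
  funext e
  unfold doubleStarColoring
  congr 1
  rw [Sym2.eq_swap, or_comm]

lemma hasProperPath_from_endpoint (huv : H.Adj u v) (hvy : H.Adj v y) (hyu : y ≠ u) :
    HasProperPath H (doubleStarColoring u v) u y :=
  ⟨.cons huv (.cons hvy .nil), by simp [huv.ne, hvy.ne, hyu.symm],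
    by simp [doubleStarColoring, huv.ne', hyu]⟩

lemma hasProperPath_via_edge (hxu : H.Adj x u) (huv : H.Adj u v) (hvy : H.Adj v y)
    (hxv : x ≠ v) (hyu : y ≠ u) (hxy : x ≠ y) :
    HasProperPath H (doubleStarColoring u v) x y :=
  ⟨.cons hxu (.cons huv (.cons hvy .nil)), by simp [hxu.ne, huv.ne, hvy.ne, hxv, hxy, hyu.symm],
    by simp [doubleStarColoring, huv.ne, huv.ne', hxv, hyu]⟩

lemma hasProperPath_via_edge_detour (hxv : H.Adj x v) (hvu : H.Adj v u) (hub : H.Adj u b)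
    (hby : H.Adj b y) (hxu : x ≠ u) (hxb : x ≠ b) (hxy : x ≠ y) (hvb : v ≠ b) (hvy : v ≠ y)
    (huy : u ≠ y) : HasProperPath H (doubleStarColoring u v) x y :=
  ⟨.cons hxv (.cons hvu (.cons hub (.cons hby .nil))),
    by simp [hxv.ne, hvu.ne, hub.ne, hby.ne, hxu, hxb, hxy, hvb, hvy, huy],
    by simp [doubleStarColoring, hvu.ne, hvu.ne', hxu, hvb, hvb.symm, hub.ne, hub.ne', huy, hvy]⟩

end DoubleStar

section FarApart

variable {V : Type*} {G : SimpleGraph V} {u v x y : V}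

lemma exists_adj_of_dist_ne_zero (h : G.dist u v ≠ 0) : ∃ a, G.Adj u a := by
  obtain ⟨p, -⟩ := exists_walk_of_dist_ne_zero h
  exact ⟨p.snd, p.adj_snd (Walk.not_nil_of_ne (dist_ne_zero_iff_ne_and_reachable.1 h).1)⟩

lemma compl_adj_of_four_le_dist (h : 4 ≤ G.dist u v) (hx : x = u ∨ G.Adj u x)
    (hy : y = v ∨ G.Adj v y) : Gᶜ.Adj x y := by
  have hr : G.Reachable u v := Reachable.of_dist_ne_zero (by omega)
  have hx : G.edist u x ≤ 1 := edist_le_one_iff_adj_or_eq.2 (hx.symm.imp_right Eq.symm)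
  have hy : G.edist y v ≤ 1 := edist_le_one_iff_adj_or_eq.2 (hy.symm.imp_left Adj.symm)
  rw [compl_adj, ne_eq, ← not_or, or_comm, ← edist_le_one_iff_adj_or_eq]
  intro hxy
  have : G.edist u v ≤ 3 := calc
    G.edist u v ≤ G.edist u x + G.edist x y + G.edist y v :=
      G.edist_triangle.trans (add_le_add_left G.edist_triangle _)
    _ ≤ 1 + 1 + 1 := by gcongr
    _ = 3 := by norm_num
  rw [← hr.coe_dist_eq_edist] at this
  norm_cast at this
  omega

lemma hasProperPath_compl_in_closedNbhd (h : 4 ≤ G.dist u v) (hx : x = u ∨ G.Adj u x)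
    (hy : y = u ∨ G.Adj u y) (hxy : x ≠ y) :
    HasProperPath Gᶜ (doubleStarColoring u v) x y := by
  obtain ⟨b, hb⟩ := exists_adj_of_dist_ne_zero (G.dist_comm ▸ (by omega : G.dist u v ≠ 0))
  have huv : Gᶜ.Adj u v := compl_adj_of_four_le_dist h (.inl rfl) (.inl rfl)
  have hfar_v {w : V} (hw : w = u ∨ G.Adj u w) : Gᶜ.Adj w v :=
    compl_adj_of_four_le_dist h hw (.inl rfl)
  have hfar_b {w : V} (hw : w = u ∨ G.Adj u w) : Gᶜ.Adj w b :=
    compl_adj_of_four_le_dist h hw (.inr hb)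
  rcases hx with rfl | hx
  · exact hasProperPath_from_endpoint huv (hfar_v hy).symm hxy.symm
  rcases hy with rfl | hy
  · exact (hasProperPath_from_endpoint huv (hfar_v (.inr hx)).symm hxy).symm
  exact hasProperPath_via_edge_detour (hfar_v (.inr hx)) huv.symm (hfar_b (.inl rfl))
    (hfar_b (.inr hy)).symm hx.ne' (hfar_b (.inr hx)).ne hxy hb.ne (hfar_v (.inr hy)).ne' hy.ne

lemma isProperPathColoring_compl_of_four_le_dist (h : 4 ≤ G.dist u v) :
    IsProperPathColoring Gᶜ (doubleStarColoring u v) := by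
  have h' : 4 ≤ G.dist v u := G.dist_comm ▸ h
  have huv : Gᶜ.Adj u v := compl_adj_of_four_le_dist h (.inl rfl) (.inl rfl)
  have near {a b : V} (hab : ¬Gᶜ.Adj a b) : a = b ∨ G.Adj b a := by
    rw [compl_adj, not_and_or, not_not, not_not, adj_comm] at hab
    exact hab
  have not_near_both {w : V} (hu : ¬Gᶜ.Adj w u) (hv : ¬Gᶜ.Adj w v) : False :=
    (compl_adj_of_four_le_dist h (near hu) (near hv)).ne rfl
  intro x y hxy
  by_cases hadj : Gᶜ.Adj x y
  · exact HasProperPath.of_adj _ hadj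
  by_cases h₁ : Gᶜ.Adj x u ∧ Gᶜ.Adj y v
  · exact hasProperPath_via_edge h₁.1 huv h₁.2.symm (by rintro rfl; exact hadj h₁.2.symm)
      (by rintro rfl; exact hadj h₁.1) hxy
  by_cases h₂ : Gᶜ.Adj x v ∧ Gᶜ.Adj y u
  · rw [doubleStarColoring_comm]
    exact hasProperPath_via_edge h₂.1 huv.symm h₂.2.symm (by rintro rfl; exact hadj h₂.2.symm)
      (by rintro rfl; exact hadj h₂.1) hxy
  rcases not_and_or.1 h₁ with hxu | hyv <;> rcases not_and_or.1 h₂ with hxv | hyu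
  · exact (not_near_both hxu hxv).elim
  · exact hasProperPath_compl_in_closedNbhd h (near hxu) (near hyu) hxy
  · rw [doubleStarColoring_comm]
    exact hasProperPath_compl_in_closedNbhd h' (near hxv) (near hyv) hxy
  · exact (not_near_both hyu hyv).elim

end FarApart

theorem pc_compl_of_diam_ge_four_general {V : Type*} (G : SimpleGraph V)
    (hd : 4 ≤ G.diam) :
    Gᶜ.Connected ∧ pc Gᶜ = 2 := by
  have : Nontrivial V := G.nontrivial_of_diam_ne_zero (by omega)
  obtain ⟨u, v, huv⟩ := G.exists_dist_eq_diam
  have h : 4 ≤ G.dist u v := huv ▸ hd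
  have hc := isProperPathColoring_compl_of_four_le_dist h
  obtain ⟨a, ha⟩ := exists_adj_of_dist_ne_zero (by omega : G.dist u v ≠ 0)
  exact ⟨hc.connected, pc_eq_two hc ha.ne (by simp [compl_adj, ha])⟩

/-- If `G` is connected with diameter at least 4, then its complement is connected and has
proper connection number 2. -/
theorem pc_compl_of_diam_ge_four {V : Type*} [Fintype V] (G : SimpleGraph V)
    (hG : G.Connected) (hd : 4 ≤ G.diam) :
    Gᶜ.Connected ∧ pc Gᶜ = 2 :=
  pc_compl_of_diam_ge_four_general G hd
end

section
/- Let G be a connected simple graph that is not complete. Suppose that neither of the following holds: (i) Ḡ is connected with diameter 2 or 3; (ii) Ḡ has exactly two connected components, one of which is a single vertex. Then pc(G) = 2. -/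
open SimpleGraph

/-!
Colour each edge `xy` by `f x + f y ∈ Fin 2` for a vertex labelling `f`: two consecutive edges
`xa`, `ay` then differ in colour exactly when `f x ≠ f y`.

Suppose `V = A ∪ B ∪ C` where every vertex of `A` is adjacent to every vertex of `B`, each of
`A`, `B` has at least two vertices, and every vertex of `C` is adjacent to two hubs `u ∈ A`,
`z ∈ B`. Labelling `u`, `z` and `C` by `1` and the rest by `0`, every pair of vertices is joined
by a proper path of length at most five running through the join.

Such a decomposition exists in both non-exceptional cases. If `Gᶜ` is disconnected, take for `A`
a component of `Gᶜ` containing an edge and for `B` its complement, which has two vertices unless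
`Gᶜ` is a component plus an isolated vertex. If `Gᶜ` is connected, its diameter is at least `2`
(`G` has an edge), hence at least `4`; for `u`, `z` at distance `diam Gᶜ` in `Gᶜ`, take `A` the
vertices at `Gᶜ`-distance at most `1` from `u`, `B` those at distance at least `3`, and `C` those
at distance `2`. Finally two colours are needed, since two non-adjacent vertices are joined only
by paths with two consecutive edges.
-/

section ProperPaths

variable {V : Type*} {G : SimpleGraph V} {k : ℕ}

def ProperlyJoined (G : SimpleGraph V) (c : Sym2 V → Fin k) (x y : V) : Prop :=
  ∃ p : G.Walk x y, p.IsPath ∧ (p.edges.map c).IsChain (· ≠ ·)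

lemma ProperlyJoined.symm {c : Sym2 V → Fin k} {x y : V} (h : ProperlyJoined G c x y) :
    ProperlyJoined G c y x := by
  obtain ⟨p, hp, hc⟩ := h
  refine ⟨p.reverse, hp.reverse, ?_⟩
  rw [Walk.edges_reverse, List.map_reverse]
  exact List.isChain_reverse.mpr (hc.imp fun _ _ => Ne.symm)

lemma properlyJoined_of_adj (c : Sym2 V → Fin k) {x y : V} (h : G.Adj x y) :
    ProperlyJoined G c x y :=
  ⟨.cons h .nil, by simp [h.ne], by simp⟩

lemma two_le_of_isProperPathColoring (hG : G ≠ ⊤) {c : Sym2 V → Fin k}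
    (hc : IsProperPathColoring G c) : 2 ≤ k := by
  obtain ⟨x, y, hxy, hnadj⟩ := ne_top_iff_exists_not_adj.mp hG
  obtain ⟨p, -, hchain⟩ := hc x y hxy
  obtain ⟨e₁, e₂, es, hes⟩ : ∃ e₁ e₂ es, p.edges = e₁ :: e₂ :: es := by
    rcases p with _ | ⟨h, _ | ⟨_, q⟩⟩
    · exact absurd rfl hxy
    · exact absurd h hnadj
    · exact ⟨_, _, _, rfl⟩
  rw [hes, List.map_cons, List.map_cons, List.Chain', List.isChain_cons_cons] at hchain
  by_contra hk
  have := Fin.subsingleton_iff_le_one.mpr (by omega : k ≤ 1)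
  exact hchain.1 (Subsingleton.elim _ _)

lemma pc_eq_two_of_ne_top (hG : G ≠ ⊤) (h : ∃ c : Sym2 V → Fin 2, IsProperPathColoring G c) :
    pc G = 2 :=
  le_antisymm (Nat.sInf_le h)
    (le_csInf ⟨2, h⟩ fun _ ⟨_, hc⟩ => two_le_of_isProperPathColoring hG hc)

end ProperPaths

section LabelColoring

variable {V : Type*} {G : SimpleGraph V} {f : V → Fin 2}

def labelColoring (f : V → Fin 2) : Sym2 V → Fin 2 :=
  Sym2.lift ⟨fun x y => f x + f y, fun _ _ => add_comm _ _⟩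

lemma labelColoring_ne_iff {x a y : V} :
    labelColoring f s(x, a) ≠ labelColoring f s(a, y) ↔ f x ≠ f y := by
  simp only [labelColoring, Sym2.lift_mk, add_comm (f a) (f y), ne_eq, add_left_inj]

lemma properlyJoined_labelColoring_path₂ {x a y : V} (h₁ : G.Adj x a) (h₂ : G.Adj a y)
    (hxy : x ≠ y) (hf : f x ≠ f y) : ProperlyJoined G (labelColoring f) x y :=
  ⟨.cons h₁ (.cons h₂ .nil), by simp [Walk.cons_isPath_iff, h₁.ne, h₂.ne, hxy],
    by simp [labelColoring_ne_iff, hf]⟩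

lemma properlyJoined_labelColoring_path₄ {x a b d y : V}
    (h₁ : G.Adj x a) (h₂ : G.Adj a b) (h₃ : G.Adj b d) (h₄ : G.Adj d y)
    (hxb : x ≠ b) (hxd : x ≠ d) (hxy : x ≠ y) (had : a ≠ d) (hay : a ≠ y) (hby : b ≠ y)
    (hf₁ : f x ≠ f b) (hf₂ : f a ≠ f d) (hf₃ : f b ≠ f y) :
    ProperlyJoined G (labelColoring f) x y :=
  ⟨.cons h₁ (.cons h₂ (.cons h₃ (.cons h₄ .nil))),
    by simp [Walk.cons_isPath_iff, h₁.ne, h₂.ne, h₃.ne, h₄.ne, hxb, hxd, hxy, had, hay, hby],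
    by simp [labelColoring_ne_iff, hf₁, hf₂, hf₃]⟩

lemma properlyJoined_labelColoring_path₅ {x a b d e y : V}
    (h₁ : G.Adj x a) (h₂ : G.Adj a b) (h₃ : G.Adj b d) (h₄ : G.Adj d e) (h₅ : G.Adj e y)
    (hxb : x ≠ b) (hxd : x ≠ d) (hxe : x ≠ e) (hxy : x ≠ y) (had : a ≠ d) (hae : a ≠ e)
    (hay : a ≠ y) (hbe : b ≠ e) (hby : b ≠ y) (hdy : d ≠ y)
    (hf₁ : f x ≠ f b) (hf₂ : f a ≠ f d) (hf₃ : f b ≠ f e) (hf₄ : f d ≠ f y) :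
    ProperlyJoined G (labelColoring f) x y :=
  ⟨.cons h₁ (.cons h₂ (.cons h₃ (.cons h₄ (.cons h₅ .nil)))),
    by simp [Walk.cons_isPath_iff, h₁.ne, h₂.ne, h₃.ne, h₄.ne, h₅.ne, hxb, hxd, hxe, hxy, had,
      hae, hay, hbe, hby, hdy],
    by simp [labelColoring_ne_iff, hf₁, hf₂, hf₃, hf₄]⟩

end LabelColoring

section HubJoin

variable {V : Type*} {G : SimpleGraph V} {A B : Set V} {u z : V}

structure IsHubJoin (G : SimpleGraph V) (A B : Set V) (u z : V) : Prop where
  hub_mem_left : u ∈ A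
  hub_mem_right : z ∈ B
  adj : ∀ x ∈ A, ∀ y ∈ B, G.Adj x y
  adj_hubs : ∀ v ∉ A, v ∉ B → G.Adj u v ∧ G.Adj z v

lemma IsHubJoin.symm (h : IsHubJoin G A B u z) : IsHubJoin G B A z u :=
  ⟨h.hub_mem_right, h.hub_mem_left, fun x hx y hy => (h.adj y hy x hx).symm,
    fun v hvB hvA => (h.adj_hubs v hvA hvB).symm⟩

lemma IsHubJoin.notMem_right (h : IsHubJoin G A B u z) {x : V} (hx : x ∈ A) : x ∉ B :=
  fun hxB => (h.adj x hx x hxB).ne rfl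

open Classical in
noncomputable def hubLabel (A B : Set V) (u z : V) (v : V) : Fin 2 :=
  if (v ∈ A ∧ v ≠ u) ∨ (v ∈ B ∧ v ≠ z) then 0 else 1

lemma hubLabel_comm : hubLabel A B u z = hubLabel B A z u := by
  funext v
  unfold hubLabel
  congr 1
  exact propext or_comm

lemma IsHubJoin.hubLabel_left_hub (h : IsHubJoin G A B u z) : hubLabel A B u z u = 1 := by
  simp [hubLabel, h.notMem_right h.hub_mem_left]

lemma IsHubJoin.hubLabel_right_hub (h : IsHubJoin G A B u z) : hubLabel A B u z z = 1 := by
  rw [hubLabel_comm]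
  exact h.symm.hubLabel_left_hub

lemma hubLabel_of_mem_left {x : V} (hx : x ∈ A) (hxu : x ≠ u) : hubLabel A B u z x = 0 := by
  simp [hubLabel, hx, hxu]

lemma hubLabel_of_mem_right {y : V} (hy : y ∈ B) (hyz : y ≠ z) : hubLabel A B u z y = 0 := by
  simp [hubLabel, hy, hyz]

lemma hubLabel_of_notMem {v : V} (hvA : v ∉ A) (hvB : v ∉ B) : hubLabel A B u z v = 1 := by
  simp [hubLabel, hvA, hvB]

lemma IsHubJoin.properlyJoined_of_mem_left (h : IsHubJoin G A B u z) {b : V} (hb : b ∈ B)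
    (hbz : b ≠ z) {x y : V} (hx : x ∈ A) (hxy : x ≠ y) :
    ProperlyJoined G (labelColoring (hubLabel A B u z)) x y := by
  have hz := h.hub_mem_right
  have hA : ∀ {v}, v ∈ A → v ≠ u → hubLabel A B u z v = 0 := hubLabel_of_mem_left
  by_cases hyB : y ∈ B
  · exact properlyJoined_of_adj _ (h.adj x hx y hyB)
  by_cases hyA : y ∈ A
  · -- `x` and `y` are joined through `z` unless neither is the hub `u`, when `x z u b y` works
    by_cases hxu : x = u
    · subst hxu
      exact properlyJoined_labelColoring_path₂ (h.adj x hx z hz) (h.adj y hyA z hz).symm hxy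
        (by simp [h.hubLabel_left_hub, hA hyA (Ne.symm hxy)])
    by_cases hyu : y = u
    · subst hyu
      exact properlyJoined_labelColoring_path₂ (h.adj x hx z hz) (h.adj y hyA z hz).symm hxy
        (by simp [h.hubLabel_left_hub, hA hx hxy])
    exact properlyJoined_labelColoring_path₄ (h.adj x hx z hz) (h.adj u h.hub_mem_left z hz).symm
      (h.adj u h.hub_mem_left b hb) (h.adj y hyA b hb).symm hxu (h.notMem_right hx <| · ▸ hb) hxy
      (Ne.symm hbz) (h.notMem_right hyA <| · ▸ hz) (Ne.symm hyu)
      (by simp [hA hx hxu, h.hubLabel_left_hub])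
      (by simp [h.hubLabel_right_hub, hubLabel_of_mem_right hb hbz])
      (by simp [h.hubLabel_left_hub, hA hyA hyu])
  by_cases hxu : x = u
  · exact properlyJoined_of_adj _ (hxu ▸ (h.adj_hubs y hyA hyB).1)
  exact properlyJoined_labelColoring_path₂ (h.adj x hx z hz) (h.adj_hubs y hyA hyB).2 hxy
    (by simp [hA hx hxu, hubLabel_of_notMem hyA hyB])

lemma IsHubJoin.properlyJoined_of_notMem (h : IsHubJoin G A B u z) {a b : V} (ha : a ∈ A)
    (hau : a ≠ u) (hb : b ∈ B) (hbz : b ≠ z) {x y : V} (hxA : x ∉ A) (hxB : x ∉ B) (hyA : y ∉ A)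
    (hyB : y ∉ B) (hxy : x ≠ y) : ProperlyJoined G (labelColoring (hubLabel A B u z)) x y := by
  have hu := h.hub_mem_left
  have hz := h.hub_mem_right
  exact properlyJoined_labelColoring_path₅ (h.adj_hubs x hxA hxB).2.symm (h.adj a ha z hz).symm
    (h.adj a ha b hb) (h.adj u hu b hb).symm (h.adj_hubs y hyA hyB).1
    (hxA <| · ▸ ha) (hxB <| · ▸ hb) (hxA <| · ▸ hu) hxy (Ne.symm hbz)
    (h.notMem_right hu <| · ▸ hz) (hyB <| · ▸ hz) hau (hyA <| · ▸ ha) (hyB <| · ▸ hb)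
    (by simp [hubLabel_of_notMem hxA hxB, hubLabel_of_mem_left ha hau])
    (by simp [h.hubLabel_right_hub, hubLabel_of_mem_right hb hbz])
    (by simp [hubLabel_of_mem_left ha hau, h.hubLabel_left_hub])
    (by simp [hubLabel_of_mem_right hb hbz, hubLabel_of_notMem hyA hyB])

theorem IsHubJoin.exists_isProperPathColoring (h : IsHubJoin G A B u z) {a b : V} (ha : a ∈ A)
    (hau : a ≠ u) (hb : b ∈ B) (hbz : b ≠ z) : ∃ c : Sym2 V → Fin 2, IsProperPathColoring G c := by
  refine ⟨labelColoring (hubLabel A B u z), fun x y hxy => ?_⟩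
  have of_mem_right : ∀ {x y}, x ∈ B → x ≠ y →
      ProperlyJoined G (labelColoring (hubLabel A B u z)) x y := fun hx hxy =>
    hubLabel_comm (A := A) ▸ h.symm.properlyJoined_of_mem_left ha hau hx hxy
  by_cases hxA : x ∈ A
  · exact h.properlyJoined_of_mem_left hb hbz hxA hxy
  by_cases hxB : x ∈ B
  · exact of_mem_right hxB hxy
  by_cases hyA : y ∈ A
  · exact (h.properlyJoined_of_mem_left hb hbz hyA hxy.symm).symm
  by_cases hyB : y ∈ B
  · exact (of_mem_right hyB hxy.symm).symm
  exact h.properlyJoined_of_notMem ha hau hb hbz hxA hxB hyA hyB hxy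

end HubJoin

namespace SimpleGraph

variable {V : Type*} {G : SimpleGraph V}

theorem Reachable.exists_dist_eq_of_le {u w : V} (h : G.Reachable u w) {i : ℕ}
    (hi : i ≤ G.dist u w) : ∃ x, G.dist u x = i := by
  obtain ⟨p, hp⟩ := h.exists_walk_length_eq_dist
  refine ⟨p.getVert i, le_antisymm ?_ ?_⟩
  · simpa [Walk.take_length, hp, hi] using dist_le (p.take i)
  · have htail := dist_le (p.drop i)
    have htri := (p.drop i).reachable.dist_triangle_right u
    rw [Walk.drop_length] at htail
    omega

theorem adj_of_dist_compl_add_two_le {u x y : V} (h : Gᶜ.dist u x + 2 ≤ Gᶜ.dist u y) :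
    G.Adj x y := by
  have hxy : x ≠ y := by rintro rfl; omega
  have hnadj : ¬Gᶜ.Adj x y := fun hadj => by
    rcases hadj.diff_dist_adj (u := u) with h' | h' | h' <;> omega
  by_contra hn
  exact hnadj ((compl_adj G x y).mpr ⟨hxy, hn⟩)

theorem adj_of_reachable_compl_of_not_reachable {p x y : V} (hx : Gᶜ.Reachable p x)
    (hy : ¬Gᶜ.Reachable p y) : G.Adj x y := by
  have hxy : x ≠ y := by rintro rfl; exact hy hx
  by_contra hn
  exact hy (hx.trans ((compl_adj G x y).mpr ⟨hxy, hn⟩).reachable)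

theorem two_le_diam_compl [Finite V] (hG : G.Connected) (hnt : G ≠ ⊤) (hcon : Gᶜ.Connected) :
    2 ≤ Gᶜ.diam := by
  obtain ⟨x, x', hne, -⟩ := ne_top_iff_exists_not_adj.mp hnt
  have := nontrivial_of_ne x x' hne
  obtain ⟨y, hxy⟩ := hG.preconnected.exists_adj_of_nontrivial x
  have hdist := hcon.one_lt_dist_of_ne_of_not_adj hxy.ne fun h => ((compl_adj G _ _).mp h).2 hxy
  exact hdist.trans_le (dist_le_diam (connected_iff_ediam_ne_top.mp hcon))

end SimpleGraph

section Decomposition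

variable {V : Type*} {G : SimpleGraph V}

theorem exists_isProperPathColoring_of_four_le_diam_compl (hd : 4 ≤ Gᶜ.diam) :
    ∃ c : Sym2 V → Fin 2, IsProperPathColoring G c := by
  have : Nonempty V := by
    by_contra! hV
    simp [diam, ediam_eq_zero_of_subsingleton] at hd
  obtain ⟨u, w, huw⟩ := Gᶜ.exists_dist_eq_diam
  have hreach : Gᶜ.Reachable u w := Reachable.of_dist_ne_zero (by omega)
  obtain ⟨a, ha⟩ := hreach.exists_dist_eq_of_le (i := 1) (by omega)
  obtain ⟨b, hb⟩ := hreach.exists_dist_eq_of_le (i := 3) (by omega)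
  have hjoin : IsHubJoin G {v | Gᶜ.dist u v ≤ 1} {v | 3 ≤ Gᶜ.dist u v} u w := by
    refine ⟨by simp, by simp; omega, fun x hx y hy => adj_of_dist_compl_add_two_le (u := u) ?_,
      fun v hv₁ hv₃ => ⟨adj_of_dist_compl_add_two_le (u := u) ?_,
        (adj_of_dist_compl_add_two_le (u := u) ?_).symm⟩⟩
    all_goals simp only [Set.mem_ofPred_eq, not_le, dist_self] at *; omega
  exact hjoin.exists_isProperPathColoring (a := a) (b := b) (by simp [ha])
    (by rintro rfl; simp at ha) (by simp [hb]) (by rintro rfl; omega)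

theorem exists_isProperPathColoring_of_not_connected_compl (hnt : G ≠ ⊤) (hcon : ¬Gᶜ.Connected) :
    (∃ c : Sym2 V → Fin 2, IsProperPathColoring G c) ∨
      (Nat.card Gᶜ.ConnectedComponent = 2 ∧ ∃ v : V, ∀ w : V, ¬Gᶜ.Adj v w) := by
  obtain ⟨p, q, hpq, hnpq⟩ := ne_top_iff_exists_not_adj.mp hnt
  have hpq' : Gᶜ.Adj p q := (compl_adj G p q).mpr ⟨hpq, hnpq⟩
  have : Nonempty V := ⟨p⟩
  obtain ⟨t, ht⟩ : ∃ t, ¬Gᶜ.Reachable p t := by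
    by_contra! hall
    exact hcon ⟨fun x y => (hall x).symm.trans (hall y)⟩
  by_cases htwo : ∃ t', ¬Gᶜ.Reachable p t' ∧ t' ≠ t
  · obtain ⟨t', ht', ht't⟩ := htwo
    have hjoin : IsHubJoin G {v | Gᶜ.Reachable p v} {v | ¬Gᶜ.Reachable p v} p t :=
      ⟨Reachable.refl p, ht, fun x hx y hy => adj_of_reachable_compl_of_not_reachable hx hy,
        fun v hv hv' => absurd (not_not.mp hv') hv⟩
    exact .inl (hjoin.exists_isProperPathColoring hpq'.reachable hpq'.ne.symm ht' ht't)
  push Not at htwo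
  refine .inr ⟨Nat.card_eq_two_iff.mpr ⟨Gᶜ.connectedComponentMk p, Gᶜ.connectedComponentMk t,
    fun h => ht (ConnectedComponent.exact h), ?_⟩, t, fun s hts => ?_⟩
  · refine Set.eq_univ_of_forall fun c => c.ind fun v => ?_
    by_cases hv : Gᶜ.Reachable p v
    · exact .inl (ConnectedComponent.sound hv.symm)
    · exact .inr (congrArg _ (htwo v hv))
  · by_cases hs : Gᶜ.Reachable p s
    · exact ht (hs.trans hts.symm.reachable)
    · exact hts.ne (htwo s hs).symm

end Decomposition

/-- Let `G` be connected and noncomplete. If it is not the case that `Gᶜ` is connected with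
diameter 2 or 3, and not the case that `Gᶜ` has exactly two connected components one of which
is a single vertex, then `pc G = 2`. -/
theorem pc_eq_two_of_compl_not_exceptional {V : Type*} [Fintype V] (G : SimpleGraph V)
    (hG : G.Connected) (hnc : G ≠ ⊤)
    (h1 : ¬ (Gᶜ.Connected ∧ (Gᶜ.diam = 2 ∨ Gᶜ.diam = 3)))
    (h2 : ¬ (Nat.card Gᶜ.ConnectedComponent = 2 ∧ ∃ v : V, ∀ w : V, ¬ Gᶜ.Adj v w)) :
    pc G = 2 := by
  refine pc_eq_two_of_ne_top hnc ?_
  by_cases hcon : Gᶜ.Connected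
  · have h23 : ¬(Gᶜ.diam = 2 ∨ Gᶜ.diam = 3) := fun h => h1 ⟨hcon, h⟩
    have h2le := two_le_diam_compl hG hnc hcon
    exact exists_isProperPathColoring_of_four_le_diam_compl (by omega)
  · exact (exists_isProperPathColoring_of_not_connected_compl hnc hcon).resolve_right h2
end

section
/- Let G be a connected simple graph with diam(G) = 3, let x be a vertex of G with eccentricity 3, and for i = 1, 2, 3 let N_i denote the set of vertices at distance exactly i from x, with n_i = |N_i|. If n_2 = 1 and n_3 ≥ 2, then pc(Ḡ) = 2. -/
open SimpleGraph

/-!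
In `Gᶜ` the vertex `x` is adjacent to the unique vertex of `N₂` and to all of `N₃`, and every
vertex of `N₁` is adjacent to every vertex of `N₃`, their distances from `x` differing by two.
Fix two vertices `y ≠ z` of `N₃` and a vertex `u ∈ N₁`, and colour the edges from `x` to
`N₃ \ {z}` and from `N₁` to `z` with `1`, all other edges with `0`. Inside this spanning
skeleton any two vertices are joined by an alternating path of length at most four. One colour
is not enough because `Gᶜ` is not complete: `x` and `u` are not adjacent in it.
-/

section

variable {V α : Type*} {G : SimpleGraph V}

namespace SimpleGraph.Walk

def IsProperPath (c : Sym2 V → α) {u v : V} (p : G.Walk u v) : Prop :=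
  p.IsPath ∧ (p.edges.map c).IsChain (· ≠ ·)

lemma IsProperPath.reverse {c : Sym2 V → α} {u v : V} {p : G.Walk u v}
    (hp : p.IsProperPath c) : p.reverse.IsProperPath c := by
  refine ⟨hp.1.reverse, ?_⟩
  rw [edges_reverse, List.map_reverse, List.isChain_reverse]
  exact hp.2.imp fun _ _ => Ne.symm

end SimpleGraph.Walk

lemma exists_properPath_of_adj {c : Sym2 V → α} {a b : V} (h : G.Adj a b) :
    ∃ p : G.Walk a b, p.IsProperPath c :=
  ⟨.cons h .nil, by simp [Walk.IsProperPath, h.ne]⟩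

lemma exists_properPath_of_adj_of_adj {c : Sym2 V → α} {a b w : V} (hab : G.Adj a b)
    (hbw : G.Adj b w) (haw : a ≠ w) (hc : c s(a, b) ≠ c s(b, w)) :
    ∃ p : G.Walk a w, p.IsProperPath c :=
  ⟨.cons hab (.cons hbw .nil), by simp [Walk.IsProperPath, hab.ne, hbw.ne, haw, hc]⟩

lemma isProperPathColoring_of_le {k : ℕ} {c : Sym2 V → Fin k} {β : Type*} [LinearOrder β]
    (f : V → β) (h : ∀ a b, a ≠ b → f a ≤ f b → ∃ p : G.Walk a b, p.IsProperPath c) :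
    IsProperPathColoring G c := by
  intro a b hab
  rcases le_total (f a) (f b) with hle | hle
  · exact h a b hab hle
  · obtain ⟨p, hp⟩ := h b a hab.symm hle
    exact ⟨p.reverse, hp.reverse⟩

lemma IsProperPathColoring.adj_of_le_one {k : ℕ} {c : Sym2 V → Fin k}
    (hc : IsProperPathColoring G c) (hk : k ≤ 1) {u v : V} (huv : u ≠ v) : G.Adj u v := by
  have : Subsingleton (Fin k) := Fin.subsingleton_iff_le_one.mpr hk
  obtain ⟨p, hp⟩ : ∃ p : G.Walk u v, p.IsProperPath c := hc u v huv
  match p, hp with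
  | .nil, _ => exact absurd rfl huv
  | .cons h .nil, _ => exact h
  | .cons _ (.cons _ _), ⟨_, hchain⟩ =>
    simp only [Walk.edges_cons, List.map_cons, List.isChain_cons_cons] at hchain
    exact absurd (Subsingleton.elim _ _) hchain.1

lemma pc_eq_two_s9 (hc : ∃ c : Sym2 V → Fin 2, IsProperPathColoring G c) {u v : V} (huv : u ≠ v)
    (hnadj : ¬G.Adj u v) : pc G = 2 := by
  refine le_antisymm (Nat.sInf_le hc) (le_csInf ⟨2, hc⟩ fun k ⟨c, hc⟩ => ?_)
  by_contra! hk
  exact hnadj (hc.adj_of_le_one (by omega) huv)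

/-- `d` plays the role of the distance from `x` in `G`, and `H` that of `Gᶜ`. -/
structure LayerSkeleton (H : SimpleGraph V) (d : V → ℕ) (x y z u : V) : Prop where
  layer_eq_zero_iff : ∀ v, d v = 0 ↔ v = x
  layer_le_three : ∀ v, d v ≤ 3
  eq_of_layer_two : ∀ a, d a = 2 → ∀ b, d b = 2 → a = b
  layer_y : d y = 3
  layer_z : d z = 3
  y_ne_z : y ≠ z
  layer_u : d u = 1
  adj_center : ∀ v, 2 ≤ d v → H.Adj x v
  adj_one_three : ∀ a b, d a = 1 → d b = 3 → H.Adj a b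

open Classical in
noncomputable def layerColoring (d : V → ℕ) (x z : V) (e : Sym2 V) : Fin 2 :=
  if (x ∈ e ∧ ∃ v ∈ e, d v = 3 ∧ v ≠ z) ∨ (z ∈ e ∧ ∃ w ∈ e, d w = 1) then 1 else 0

section layerColoring

variable {d : V → ℕ} {x z a b : V}

lemma layerColoring_center (hb : d b = 3) (hbz : b ≠ z) : layerColoring d x z s(x, b) = 1 :=
  if_pos (Or.inl ⟨Sym2.mem_mk_left _ _, b, Sym2.mem_mk_right _ _, hb, hbz⟩)

lemma layerColoring_one_z (ha : d a = 1) : layerColoring d x z s(a, z) = 1 :=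
  if_pos (Or.inr ⟨Sym2.mem_mk_right _ _, a, Sym2.mem_mk_left _ _, ha⟩)

lemma layerColoring_center_z (hx : d x = 0) (hz : d z = 3) :
    layerColoring d x z s(x, z) = 0 := by
  grind [layerColoring]

lemma layerColoring_center_of_layer_two (hx : d x = 0) (hb : d b = 2) :
    layerColoring d x z s(x, b) = 0 := by
  grind [layerColoring]

lemma layerColoring_one_three (hx : d x = 0) (hz : d z = 3) (ha : d a = 1) (hb : d b = 3)
    (hbz : b ≠ z) : layerColoring d x z s(a, b) = 0 := by
  grind [layerColoring]

end layerColoring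

namespace LayerSkeleton

variable {H : SimpleGraph V} {d : V → ℕ} {x y z u a b : V}

lemma layer_x (S : LayerSkeleton H d x y z u) : d x = 0 := (S.layer_eq_zero_iff x).2 rfl

lemma exists_properPath_from_center (S : LayerSkeleton H d x y z u) (hb : b ≠ x) :
    ∃ p : H.Walk x b, p.IsProperPath (layerColoring d x z) := by
  have hx := S.layer_x; have hy := S.layer_y; have hz := S.layer_z; have hyz := S.y_ne_z
  have hb0 : d b ≠ 0 := fun h => hb ((S.layer_eq_zero_iff b).1 h)
  by_cases hb1 : d b = 1
  · refine exists_properPath_of_adj_of_adj (S.adj_center y (by omega))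
      (S.adj_one_three b y hb1 hy).symm hb.symm ?_
    simp [layerColoring_center hy hyz, Sym2.eq_swap (a := y),
      layerColoring_one_three hx hz hb1 hy hyz]
  · exact exists_properPath_of_adj (S.adj_center b (by omega))

lemma exists_properPath_from_layer_one (S : LayerSkeleton H d x y z u)
    (ha : d a = 1) (hb : 1 ≤ d b) (hab : a ≠ b) :
    ∃ p : H.Walk a b, p.IsProperPath (layerColoring d x z) := by
  have hx := S.layer_x; have hy := S.layer_y; have hz := S.layer_z; have hyz := S.y_ne_z
  have hb3 := S.layer_le_three b
  obtain hb | hb | hb : d b = 1 ∨ d b = 2 ∨ d b = 3 := by omega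
  · refine ⟨.cons (S.adj_one_three a y ha hy) (.cons (S.adj_center y (by omega)).symm
      (.cons (S.adj_center z (by omega)) (.cons (S.adj_one_three b z hb hz).symm .nil))), ?_, ?_⟩
    · grind [Walk.isPath_def, Walk.support_cons, Walk.support_nil]
    · simp [layerColoring_one_three hx hz ha hy hyz, Sym2.eq_swap (a := y),
        layerColoring_center hy hyz, layerColoring_center_z hx hz, Sym2.eq_swap (a := z),
        layerColoring_one_z hb]
  · refine ⟨.cons (S.adj_one_three a y ha hy) (.cons (S.adj_center y (by omega)).symm
      (.cons (S.adj_center b (by omega)) .nil)), ?_, ?_⟩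
    · grind [Walk.isPath_def, Walk.support_cons, Walk.support_nil]
    · simp [layerColoring_one_three hx hz ha hy hyz, Sym2.eq_swap (a := y),
        layerColoring_center hy hyz, layerColoring_center_of_layer_two hx hb]
  · exact exists_properPath_of_adj (S.adj_one_three a b ha hb)

lemma exists_properPath_from_layer_two (S : LayerSkeleton H d x y z u)
    (ha : d a = 2) (hb : d b = 3) :
    ∃ p : H.Walk a b, p.IsProperPath (layerColoring d x z) := by
  have hx := S.layer_x; have hy := S.layer_y; have hyz := S.y_ne_z; have hu := S.layer_u
  rcases eq_or_ne b z with rfl | hbz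
  · refine ⟨.cons (S.adj_center a (by omega)).symm (.cons (S.adj_center y (by omega))
      (.cons (S.adj_one_three u y hu hy).symm (.cons (S.adj_one_three u b hu hb) .nil))), ?_, ?_⟩
    · grind [Walk.isPath_def, Walk.support_cons, Walk.support_nil]
    · simp [Sym2.eq_swap (a := a), layerColoring_center_of_layer_two hx ha,
        layerColoring_center hy hyz, Sym2.eq_swap (a := y), layerColoring_one_three hx hb hu hy hyz,
        layerColoring_one_z hu]
  · refine exists_properPath_of_adj_of_adj (S.adj_center a (by omega)).symm
      (S.adj_center b (by omega)) (by grind) ?_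
    simp [Sym2.eq_swap (a := a), layerColoring_center_of_layer_two hx ha,
      layerColoring_center hb hbz]

lemma exists_properPath_within_layer_three (S : LayerSkeleton H d x y z u)
    (ha : d a = 3) (hb : d b = 3) (hab : a ≠ b) :
    ∃ p : H.Walk a b, p.IsProperPath (layerColoring d x z) := by
  have hx := S.layer_x; have hz := S.layer_z; have hu := S.layer_u
  have hxa := S.adj_center a (by omega)
  have hxb := S.adj_center b (by omega)
  rcases eq_or_ne a z with rfl | haz
  · refine exists_properPath_of_adj_of_adj hxa.symm hxb hab ?_
    simp [Sym2.eq_swap (a := a), layerColoring_center_z hx hz, layerColoring_center hb hab.symm]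
  rcases eq_or_ne b z with rfl | hbz
  · refine exists_properPath_of_adj_of_adj hxa.symm hxb hab ?_
    simp [Sym2.eq_swap (a := a), layerColoring_center ha hab, layerColoring_center_z hx hz]
  · refine ⟨.cons hxa.symm (.cons (S.adj_center z (by omega))
      (.cons (S.adj_one_three u z hu hz).symm (.cons (S.adj_one_three u b hu hb) .nil))), ?_, ?_⟩
    · grind [Walk.isPath_def, Walk.support_cons, Walk.support_nil]
    · simp [Sym2.eq_swap (a := a), layerColoring_center ha haz,
        layerColoring_center_z hx hz, Sym2.eq_swap (a := z), layerColoring_one_z hu,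
        layerColoring_one_three hx hz hu hb hbz]

theorem isProperPathColoring (S : LayerSkeleton H d x y z u) :
    IsProperPathColoring H (layerColoring d x z) := by
  refine isProperPathColoring_of_le d fun a b hab hle => ?_
  have ha3 := S.layer_le_three a
  have hb3 := S.layer_le_three b
  obtain ha | ha | ha | ha : d a = 0 ∨ d a = 1 ∨ d a = 2 ∨ d a = 3 := by omega
  · obtain rfl := (S.layer_eq_zero_iff a).1 ha
    exact S.exists_properPath_from_center hab.symm
  · exact S.exists_properPath_from_layer_one ha (by omega) hab
  · have hb : d b ≠ 2 := fun hb => hab (S.eq_of_layer_two a ha b hb)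
    exact S.exists_properPath_from_layer_two ha (by omega)
  · exact S.exists_properPath_within_layer_three ha (by omega) hab

end LayerSkeleton

lemma layerSkeleton_compl_dist {x y z u : V} (hG : G.Connected) (h3 : ∀ v, G.dist x v ≤ 3)
    (h2 : ∀ a, G.dist x a = 2 → ∀ b, G.dist x b = 2 → a = b) (hy : G.dist x y = 3)
    (hz : G.dist x z = 3) (hyz : y ≠ z) (hxu : G.Adj x u) :
    LayerSkeleton Gᶜ (G.dist x) x y z u where
  layer_eq_zero_iff v := hG.dist_eq_zero_iff.trans eq_comm
  layer_le_three := h3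
  eq_of_layer_two := h2
  layer_y := hy
  layer_z := hz
  y_ne_z := hyz
  layer_u := dist_eq_one_iff_adj.mpr hxu
  adj_center v hv := by
    refine (compl_adj G x v).mpr ⟨?_, fun h => ?_⟩
    · rintro rfl
      simp at hv
    · rw [← dist_eq_one_iff_adj] at h
      omega
  adj_one_three a b ha hb := by
    refine (compl_adj G a b).mpr ⟨?_, fun h => ?_⟩
    · rintro rfl
      omega
    · have := h.diff_dist_adj (u := x)
      omega

end

theorem pc_compl_diam_three_special_general {V : Type*} (G : SimpleGraph V)
    (hG : G.Connected) (x : V)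
    (heccle : ∀ y : V, G.dist x y ≤ 3)
    (hn2 : {v : V | G.dist x v = 2}.ncard = 1)
    (hn3 : 2 ≤ {v : V | G.dist x v = 3}.ncard) :
    pc Gᶜ = 2 := by
  have h2 := (Set.ncard_le_one (Set.finite_of_ncard_pos (by omega))).mp hn2.le
  obtain ⟨y, hy, z, hz, hyz⟩ :=
    (Set.one_lt_ncard (Set.finite_of_ncard_pos (by omega))).mp hn3
  have hxy : x ≠ y := by
    rintro rfl
    simp at hy
  obtain ⟨u, hxu⟩ := (hG.preconnected x y).nonempty_neighborSet_left hxy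
  have S := layerSkeleton_compl_dist hG heccle h2 hy hz hyz hxu
  exact pc_eq_two_s9 ⟨_, S.isProperPathColoring⟩ hxu.ne fun h => ((compl_adj G x u).mp h).2 hxu

/-- Let `G` be connected with diameter 3 and let `x` have eccentricity 3. If the set of
vertices at distance 2 from `x` has exactly one element and the set of vertices at distance 3
from `x` has at least two elements, then `pc Gᶜ = 2`. -/
theorem pc_compl_diam_three_special {V : Type*} [Fintype V] (G : SimpleGraph V)
    (hG : G.Connected) (hd : G.diam = 3) (x : V)
    (heccle : ∀ y : V, G.dist x y ≤ 3) (hecc : ∃ y : V, G.dist x y = 3)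
    (hn2 : {v : V | G.dist x v = 2}.ncard = 1)
    (hn3 : 2 ≤ {v : V | G.dist x v = 3}.ncard) :
    pc Gᶜ = 2 :=
  pc_compl_diam_three_special_general G hG x heccle hn2 hn3
end

section
/- Let G be a connected simple graph with diam(G) = 3, let x be a vertex of G with eccentricity 3, and let N_2 denote the set of vertices at distance exactly 2 from x. If |N_2| ≥ 2 and Ḡ is connected, then pc(Ḡ) ≥ n_2', where n_2' is the number of vertices v in N_2 whose degree in Ḡ equals 1. -/
open SimpleGraph

/-!
A vertex at distance 2 from `x` is not adjacent to `x` in `G`, so in `Gᶜ` it is adjacent to `x`;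
if its degree in `Gᶜ` is 1, it is a pendant vertex hanging off `x`. The only path in `Gᶜ`
between two such pendant vertices `u`, `v` is `u x v`, so a proper-path coloring must give the
edges `ux` and `xv` different colors. Hence the edges from `x` to these pendant vertices all
have distinct colors, and there are at most as many of them as colors.
-/

namespace SimpleGraph

variable {V : Type*} {G : SimpleGraph V}

lemma Walk.IsPath.exists_edges_eq_cons_of_neighborSet_eq_singleton {u w x : V}
    {p : G.Walk u w} (hp : p.IsPath) (huw : u ≠ w) (hu : G.neighborSet u = {x}) :
    ∃ q : G.Walk x w, q.IsPath ∧ p.edges = s(u, x) :: q.edges := by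
  cases p with
  | nil => exact absurd rfl huw
  | cons hadj q =>
    obtain rfl : _ = x := (Set.ext_iff.mp hu _).mp hadj
    exact ⟨q, hp.of_cons, rfl⟩

lemma Walk.IsPath.edges_eq_of_neighborSet_eq_singleton {u v x : V}
    {p : G.Walk u v} (hp : p.IsPath) (huv : u ≠ v)
    (hu : G.neighborSet u = {x}) (hv : G.neighborSet v = {x}) :
    p.edges = [s(u, x), s(x, v)] := by
  obtain ⟨q, hq, hpq⟩ := hp.exists_edges_eq_cons_of_neighborSet_eq_singleton huv hu
  have hvx : v ≠ x := G.ne_of_adj (show x ∈ G.neighborSet v from hv ▸ rfl)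
  obtain ⟨r, hr, hqr⟩ :=
    hq.reverse.exists_edges_eq_cons_of_neighborSet_eq_singleton hvx hv
  rw [Walk.edges_eq_nil.mpr (Walk.isPath_iff_nil.mp hr), Walk.edges_reverse,
    List.reverse_eq_cons_iff] at hqr
  simp [hpq, hqr, Sym2.eq_swap]

lemma compl_neighborSet_eq_singleton_of_dist_eq_two {x v : V}
    (hdist : G.dist x v = 2) (hdeg : (Gᶜ.neighborSet v).ncard = 1) :
    Gᶜ.neighborSet v = {x} := by
  have hvx : v ≠ x := by rintro rfl; simp at hdist
  have hnadj : ¬ G.Adj v x := fun h => by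
    rw [← dist_eq_one_iff_adj, dist_comm] at h; omega
  obtain ⟨a, ha⟩ := Set.ncard_eq_one.mp hdeg
  have hx : x ∈ Gᶜ.neighborSet v := (compl_adj G v x).mpr ⟨hvx, hnadj⟩
  rw [ha] at hx ⊢
  rw [Set.mem_singleton_iff.mp hx]

end SimpleGraph

section

variable {V : Type*} {G : SimpleGraph V}

lemma IsProperPathColoring.of_injective (hG : G.Connected) {k : ℕ}
    {c : Sym2 V → Fin k} (hc : Function.Injective c) : IsProperPathColoring G c := by
  intro u v _
  obtain ⟨p, hp⟩ := hG.exists_isPath u v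
  exact ⟨p, hp, ((hp.edges_nodup).map hc).isChain⟩

lemma le_pc_of_forall_isProperPathColoring [Fintype V] (hG : G.Connected) {n : ℕ}
    (h : ∀ k (c : Sym2 V → Fin k), IsProperPathColoring G c → n ≤ k) : n ≤ pc G := by
  -- connectivity rules out `sInf ∅ = 0`: injective colorings are proper-path colorings
  refine le_csInf ?_ fun k ⟨c, hc⟩ => h k c hc
  exact ⟨_, _, .of_injective hG (Fintype.equivFin (Sym2 V)).injective⟩

lemma IsProperPathColoring.injOn_pendant {k : ℕ} {c : Sym2 V → Fin k}
    (hc : IsProperPathColoring G c) (x : V) :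
    Set.InjOn (fun v => c s(x, v)) {v | G.neighborSet v = {x}} := by
  intro u hu v hv hcuv
  by_contra huv
  obtain ⟨p, hp, hchain⟩ := hc u v huv
  rw [hp.edges_eq_of_neighborSet_eq_singleton huv hu hv] at hchain
  exact List.isChain_pair.mp hchain (by simpa [Sym2.eq_swap] using hcuv)

lemma ncard_pendant_le_pc [Fintype V] (hG : G.Connected) (x : V) :
    {v | G.neighborSet v = {x}}.ncard ≤ pc G :=
  le_pc_of_forall_isProperPathColoring hG fun k c hc =>
    (Set.ncard_le_ncard_of_injOn _ (fun _ _ => Set.mem_univ _) (hc.injOn_pendant x)).trans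
      (by simp [Set.ncard_univ])

end

theorem pc_compl_ge_pendant_count_general {V : Type*} [Fintype V] (G : SimpleGraph V)
    (x : V) (hconn : Gᶜ.Connected) :
    {v : V | G.dist x v = 2 ∧ (Gᶜ.neighborSet v).ncard = 1}.ncard ≤ pc Gᶜ :=
  calc {v : V | G.dist x v = 2 ∧ (Gᶜ.neighborSet v).ncard = 1}.ncard
      ≤ {v | Gᶜ.neighborSet v = {x}}.ncard :=
        Set.ncard_le_ncard fun _ ⟨hdist, hdeg⟩ =>
          compl_neighborSet_eq_singleton_of_dist_eq_two hdist hdeg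
    _ ≤ pc Gᶜ := ncard_pendant_le_pc hconn x

/-- Let `G` be connected with diameter 3 and let `x` have eccentricity 3. If at least two
vertices are at distance 2 from `x` and `Gᶜ` is connected, then `pc Gᶜ` is at least the
number of vertices at distance 2 from `x` whose degree in `Gᶜ` equals 1. -/
theorem pc_compl_ge_pendant_count {V : Type*} [Fintype V] (G : SimpleGraph V)
    (hG : G.Connected) (hd : G.diam = 3) (x : V)
    (heccle : ∀ y : V, G.dist x y ≤ 3) (hecc : ∃ y : V, G.dist x y = 3)
    (hn2 : 2 ≤ {v : V | G.dist x v = 2}.ncard)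
    (hconn : Gᶜ.Connected) :
    {v : V | G.dist x v = 2 ∧ (Gᶜ.neighborSet v).ncard = 1}.ncard ≤ pc Gᶜ :=
  pc_compl_ge_pendant_count_general G x hconn
end

section
/- Let G be a connected triangle-free simple graph with diam(G) = 2. If the complement Ḡ is connected, then pc(Ḡ) = 2. -/
open SimpleGraph

/-!
Since `G` has no triangle, any three vertices of `Gᶜ` span an edge of `Gᶜ`. In a connected graph
with this property a longest path `a ⋯ b` is Hamiltonian: an outside vertex `u` adjacent to the
path cannot be adjacent to `a` or `b`, so `a` and `b` are adjacent, the path closes into a cycle,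
and reopening that cycle at the neighbour of `u` gives a longer path. Colouring the edges of a
Hamiltonian path alternately makes every subpath proper, so `pc Gᶜ ≤ 2`. As `diam G = 2`, `G` has
an edge, so `Gᶜ` is not complete and one colour does not suffice.
-/

theorem List.Nodup.isChain_idxOf_succ {α : Type*} [DecidableEq α] {l : List α} (hl : l.Nodup) :
    l.IsChain fun x y => l.idxOf y = l.idxOf x + 1 :=
  List.isChain_iff_getElem.mpr fun i hi => by
    rw [hl.idxOf_getElem, hl.idxOf_getElem]

theorem List.Nodup.isChain_map_idxOf_ne_of_isInfix {α : Type*} [DecidableEq α] {l l' : List α}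
    (hl : l.Nodup) (h : l' <:+: l) :
    (l'.map fun x => Fin.ofNat 2 (l.idxOf x)).IsChain (· ≠ ·) :=
  List.isChain_map _ |>.mpr <| (hl.isChain_idxOf_succ.infix h).imp fun x y hxy => by
    rw [hxy, Ne, Fin.ext_iff, Fin.val_ofNat, Fin.val_ofNat]
    omega

namespace SimpleGraph

variable {V : Type*} {G : SimpleGraph V} {a b u v x : V}

theorem adj_of_compl_cliqueFree_three (h : Gᶜ.CliqueFree 3) (hux : Gᶜ.Adj u x) (huv : Gᶜ.Adj u v)
    (hxv : x ≠ v) : G.Adj x v := by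
  classical
  by_contra hnadj
  exact h {u, x, v} <| is3Clique_triple_iff.mpr ⟨hux, huv, (compl_adj G x v).mpr ⟨hxv, hnadj⟩⟩

namespace Walk

theorem IsPath.exists_isPath_isSubwalk [DecidableEq V] {p : G.Walk a b} (hp : p.IsPath)
    (hu : u ∈ p.support) (hv : v ∈ p.support) :
    ∃ q : G.Walk u v, q.IsPath ∧ (q.IsSubwalk p ∨ q.reverse.IsSubwalk p) := by
  have hv' : v ∈ (p.takeUntil u hu).support ∨ v ∈ (p.dropUntil u hu).support := by
    rwa [← mem_support_append_iff, take_spec]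
  rcases hv' with hv' | hv'
  · refine ⟨((p.takeUntil u hu).dropUntil v hv').reverse,
      (hp.takeUntil hu).dropUntil hv' |>.reverse, .inr ?_⟩
    rw [reverse_reverse]
    exact (isSubwalk_dropUntil _ _).trans (isSubwalk_takeUntil _ _)
  · exact ⟨(p.dropUntil u hu).takeUntil v hv', (hp.dropUntil hu).takeUntil hv',
      .inl <| (isSubwalk_takeUntil _ _).trans (isSubwalk_dropUntil _ _)⟩

def alternatingColoring [DecidableEq V] (p : G.Walk a b) : Sym2 V → Fin 2 :=
  fun e => Fin.ofNat 2 (p.edges.idxOf e)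

theorem IsHamiltonian.isProperPathColoring_alternatingColoring [DecidableEq V] {p : G.Walk a b}
    (hp : p.IsHamiltonian) : IsProperPathColoring G p.alternatingColoring := by
  intro u v _
  obtain ⟨q, hq, hsub⟩ := hp.isPath.exists_isPath_isSubwalk (hp.mem_support u) (hp.mem_support v)
  refine ⟨q, hq, ?_⟩
  have hnd : p.edges.Nodup := hp.isPath.isTrail.edges_nodup
  rcases hsub with h | h
  · exact List.Nodup.isChain_map_idxOf_ne_of_isInfix hnd h.edges_isInfix
  · have := List.Nodup.isChain_map_idxOf_ne_of_isInfix hnd h.edges_isInfix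
    rw [edges_reverse, List.map_reverse, List.isChain_reverse] at this
    exact this.imp fun _ _ h => h.symm

theorem IsPath.exists_isPath_perm_support_of_adj [DecidableEq V] {p : G.Walk a b} (hp : p.IsPath)
    (hba : G.Adj b a) (hx : x ∈ p.support) :
    ∃ (y : V) (q : G.Walk x y), q.IsPath ∧ q.support.Perm p.support := by
  by_cases hxa : x = a
  · subst hxa
    exact ⟨b, p, hp, .refl _⟩
  set p₁ := p.takeUntil x hx
  set p₂ := p.dropUntil x hx
  have hp₁ : ¬p₁.Nil := fun h => hxa h.eq.symm
  have hsupp : p.support = p₁.dropLast.support ++ p₂.support := by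
    conv_lhs =>
      rw [← p.take_spec hx]
      change (p₁.append p₂).support
      rw [← concat_dropLast (adj_penultimate hp₁)]
    rw [support_append, support_concat, List.append_assoc,
      List.singleton_append, cons_tail_support]
  have hperm : (p₂.append (cons hba p₁.dropLast)).support.Perm p.support := by
    rw [hsupp, support_append, support_cons, List.tail_cons]
    exact List.perm_append_comm
  exact ⟨_, _, IsPath.mk' (hperm.nodup_iff.mpr hp.support_nodup), hperm⟩

theorem IsPath.exists_isPath_length_succ_of_compl_cliqueFree_three [DecidableEq V]
    (hG : G.Connected) (h : Gᶜ.CliqueFree 3) {p : G.Walk a b} (hp : p.IsPath)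
    (hham : ¬p.IsHamiltonian) :
    ∃ (c d : V) (q : G.Walk c d), q.IsPath ∧ q.length = p.length + 1 := by
  obtain ⟨w, hw⟩ : ∃ w, w ∉ p.support := by
    by_contra! hall
    exact hham (hp.isHamiltonian_of_mem hall)
  obtain ⟨⟨⟨x, u⟩, hxu⟩, -, hx, hu⟩ :=
    (hG.preconnected a w).some.exists_boundary_dart {v | v ∈ p.support} p.start_mem_support hw
  simp only [Set.mem_ofPred_eq] at hx hu
  by_cases hua : G.Adj u a
  · exact ⟨u, b, cons hua p, hp.cons hu, rfl⟩
  by_cases hub : G.Adj u b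
  · exact ⟨u, a, cons hub p.reverse, hp.reverse.cons (by rwa [support_reverse, List.mem_reverse]),
      by rw [length_cons, length_reverse]⟩
  have hne : ∀ {y}, y ∈ p.support → ¬G.Adj u y → Gᶜ.Adj u y := fun hy hnadj =>
    (compl_adj G u _).mpr ⟨fun h => hu (h ▸ hy), hnadj⟩
  have hab : a ≠ b := by
    rintro rfl
    rw [nil_iff_support_eq.mp (isPath_iff_nil.mp hp), List.mem_singleton] at hx
    exact hua (hx ▸ hxu.symm)
  have hba : G.Adj b a := (adj_of_compl_cliqueFree_three h (hne p.start_mem_support hua)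
    (hne p.end_mem_support hub) hab).symm
  obtain ⟨y, q, hq, hperm⟩ := hp.exists_isPath_perm_support_of_adj hba hx
  refine ⟨u, y, cons hxu.symm q, hq.cons (fun hu' => hu (hperm.subset hu')), ?_⟩
  have := hperm.length_eq
  rw [length_support, length_support] at this
  rw [length_cons, this]

end Walk

theorem Connected.exists_isHamiltonian_of_compl_cliqueFree_three [Fintype V] [DecidableEq V]
    (hG : G.Connected) (h : Gᶜ.CliqueFree 3) : ∃ (a b : V) (p : G.Walk a b), p.IsHamiltonian := by
  by_contra! hnot
  have hlong : ∀ n, ∃ (a b : V) (p : G.Walk a b), p.IsPath ∧ p.length = n := by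
    intro n
    induction n with
    | zero =>
      obtain ⟨v⟩ := hG.nonempty
      exact ⟨v, v, .nil, .nil, rfl⟩
    | succ n ih =>
      obtain ⟨a, b, p, hp, rfl⟩ := ih
      exact hp.exists_isPath_length_succ_of_compl_cliqueFree_three hG h (hnot a b p)
  obtain ⟨a, b, p, hp, hlen⟩ := hlong (Fintype.card V)
  exact hp.length_lt.ne hlen

end SimpleGraph

section ProperPathColoring

variable {V : Type*} {G : SimpleGraph V} {k : ℕ} {c : Sym2 V → Fin k}

theorem IsProperPathColoring.two_le_of_not_adj (hc : IsProperPathColoring G c) {u v : V}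
    (huv : u ≠ v) (hnadj : ¬G.Adj u v) : 2 ≤ k := by
  obtain ⟨p, -, hchain⟩ := hc u v huv
  match p, hchain with
  | .nil, _ => exact absurd rfl huv
  | .cons h .nil, _ => exact absurd h hnadj
  | .cons _ (.cons _ _), hchain =>
    by_contra! hk
    have : Subsingleton (Fin k) := Fin.subsingleton_iff_le_one.mpr (by omega)
    exact (List.isChain_cons_cons.mp hchain).1 (Subsingleton.elim _ _)

theorem IsProperPathColoring.pc_le (hc : IsProperPathColoring G c) : pc G ≤ k :=
  Nat.sInf_le ⟨c, hc⟩

-- `hc` rules out the junk value `pc G = sInf ∅ = 0`.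
theorem IsProperPathColoring.two_le_pc_of_not_adj (hc : IsProperPathColoring G c) {u v : V}
    (huv : u ≠ v) (hnadj : ¬G.Adj u v) : 2 ≤ pc G :=
  le_csInf ⟨k, c, hc⟩ fun _ ⟨_, hc'⟩ => hc'.two_le_of_not_adj huv hnadj

end ProperPathColoring

theorem pc_compl_triangle_free_diam_two_general {V : Type*} [Fintype V] (G : SimpleGraph V)
    (htf : G.CliqueFree 3) (hd : G.diam = 2)
    (hconn : Gᶜ.Connected) :
    pc Gᶜ = 2 := by
  classical
  obtain ⟨u, v, huv⟩ : ∃ u v, G.Adj u v :=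
    ne_bot_iff_exists_adj.mp fun hbot => by simp [hbot, diam_bot] at hd
  obtain ⟨a, b, p, hp⟩ :=
    hconn.exists_isHamiltonian_of_compl_cliqueFree_three (by rwa [compl_compl])
  have hc := hp.isProperPathColoring_alternatingColoring
  exact le_antisymm hc.pc_le (hc.two_le_pc_of_not_adj huv.ne fun h => h.2 huv)

/-- If `G` is connected, triangle-free, has diameter 2 and `Gᶜ` is connected,
then `pc Gᶜ = 2`. -/
theorem pc_compl_triangle_free_diam_two {V : Type*} [Fintype V] (G : SimpleGraph V)
    (hG : G.Connected) (htf : G.CliqueFree 3) (hd : G.diam = 2)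
    (hconn : Gᶜ.Connected) :
    pc Gᶜ = 2 :=
  pc_compl_triangle_free_diam_two_general G htf hd hconn
end
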